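/- For any tree T with out-degree at most 2 whose nodes are labelled by characters from {c, ε}, if T contains n ≥ 1 nodes labelled c, then score(T) ≥ log₂(n), where the score is defined recursively by: score of a single ε-leaf is 0; score(node labelled b with single child T₁) = score(T₁) + (1 if b = c else 0); score(node labelled ε with children T₁,…,Tₘ) = max over i of (score(Tᵢ) + (1 if Σ_{j≠i} score(Tⱼ) > 0 else 0)). -/

import Mathlib

inductive LTree (α : Type) : Type
  | node : Option α → List (LTree α) → LTree α

namespace LTree

variable {α : Type} [DecidableEq α]

/-- Number of nodes labelled `c`. -/
def countc (c : α) : LTree α → ℕ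
  | .node b ts =>
    (if b = some c then 1 else 0) + (ts.attach.map (fun t => countc c t.1)).sum
decreasing_by
  have := List.sizeOf_lt_of_mem t.2; simp; omega

/-- The score of a tree with respect to output character `c`. -/
def score (c : α) : LTree α → ℕ
  | .node _ [] => 0
  | .node b [t] => score c t + (if b = some c then 1 else 0)
  | .node _ ts =>
    (ts.attach.map (fun t =>
      score c t.1 +
        (if 0 < (ts.attach.map (fun t => score c t.1)).sum - score c t.1
         then 1 else 0))).foldr max 0
decreasing_by
  all_goals first
    | (have := List.sizeOf_lt_of_mem t.2; simp; omega)
    | (simp; omega)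

/-- Out-degree at most `d`. -/
inductive DegLE (d : ℕ) : LTree α → Prop
  | node : ∀ b ts, ts.length ≤ d → (∀ t ∈ ts, DegLE d t) → DegLE d (.node b ts)

/-- Only nodes with exactly one child may carry a non-ε label. -/
inductive BranchEps : LTree α → Prop
  | node : ∀ (b : Option α) ts, (ts.length ≠ 1 → b = none) →
      (∀ t ∈ ts, BranchEps t) → BranchEps (.node b ts)

/-- `Subtree t' t`: `t'` is the tree rooted at some node of `t`. -/
inductive Subtree : LTree α → LTree α → Prop
  | refl : ∀ t, Subtree t t
  | child : ∀ {t' t : LTree α} (b : Option α) (ts : List (LTree α)),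
      t ∈ ts → Subtree t' t → Subtree t' (.node b ts)

/-- Every root-to-leaf branch has at most `h` edges. -/
inductive HeightLE : ℕ → LTree α → Prop
  | leaf : ∀ h b, HeightLE h (.node b [])
  | node : ∀ h b ts, (∀ t ∈ ts, HeightLE h t) → HeightLE (h + 1) (.node b ts)

end LTree

/-! The induction hypothesis is `countc T + 1 ≤ 2 ^ score T`; the `+ 1` records that a subtree of
score `0` contains no `c`. A `c`-labelled unary node doubles the bound. At a binary node a subtree
of score `0` adds nothing, and if both subtrees have positive score, the score exceeds both of
them by one, so `2 ^ s₁ + 2 ^ s₂ ≤ 2 ^ (max s₁ s₂ + 1)` closes the step. -/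

theorem add_add_one_le_two_pow_max {a b s t : ℕ} (ha : a + 1 ≤ 2 ^ s) (hb : b + 1 ≤ 2 ^ t) :
    a + b + 1 ≤ 2 ^ max (s + if 0 < t then 1 else 0) (t + if 0 < s then 1 else 0) := by
  rcases Nat.eq_zero_or_pos s with rfl | hs
  · calc a + b + 1 ≤ 2 ^ t := by simp at ha; omega
      _ ≤ _ := Nat.pow_le_pow_right two_pos (le_max_of_le_right (by simp))
  rcases Nat.eq_zero_or_pos t with rfl | ht
  · calc a + b + 1 ≤ 2 ^ s := by simp at hb; omega
      _ ≤ _ := Nat.pow_le_pow_right two_pos (le_max_of_le_left (by simp))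
  have hmax : max (s + 1) (t + 1) = max s t + 1 := Nat.add_max_add_right s t 1
  have hs' := Nat.pow_le_pow_right two_pos (le_max_left s t)
  have ht' := Nat.pow_le_pow_right two_pos (le_max_right s t)
  simp only [hs, ht, if_true, hmax, pow_succ]
  omega

namespace LTree

variable {α : Type} [DecidableEq α] (c : α)

theorem countc_node (b : Option α) (ts : List (LTree α)) :
    countc c (.node b ts) = (if b = some c then 1 else 0) + (ts.map (countc c)).sum := by
  rw [countc, ← List.attach_map_val (l := ts) (f := countc c)]

theorem score_nil (b : Option α) : score c (.node b []) = 0 := by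
  rw [score]

theorem score_singleton (b : Option α) (t : LTree α) :
    score c (.node b [t]) = score c t + if b = some c then 1 else 0 := by
  rw [score]

theorem score_pair (b : Option α) (t₁ t₂ : LTree α) :
    score c (.node b [t₁, t₂]) = max (score c t₁ + if 0 < score c t₂ then 1 else 0)
      (score c t₂ + if 0 < score c t₁ then 1 else 0) := by
  rw [score] <;> simp

theorem countc_add_one_le_two_pow_score {T : LTree α} (hdeg : DegLE 2 T) (hbr : BranchEps T) :
    countc c T + 1 ≤ 2 ^ score c T := by
  induction hdeg with
  | node b ts hlen _ ih =>
  obtain ⟨_, _, hb, hbr⟩ := hbr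
  replace ih := fun t ht => ih t ht (hbr t ht)
  rcases ts with _ | ⟨t₁, _ | ⟨t₂, _ | ⟨_, _⟩⟩⟩
  · simp [countc_node, score_nil, hb]
  · have h₁ := ih t₁ (by simp)
    rw [countc_node, score_singleton]
    simp only [List.map_cons, List.map_nil, List.sum_cons, List.sum_nil, Nat.add_zero]
    split_ifs
    · rw [pow_succ]; omega
    · simpa using h₁
  · rw [countc_node, score_pair, hb (by simp)]
    simpa [add_assoc] using add_add_one_le_two_pow_max (ih t₁ (by simp)) (ih t₂ (by simp))
  · simp at hlen

end LTree

open LTree in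
theorem stmt0_general {α : Type} [DecidableEq α] (c : α) (T : LTree α) (n : ℕ)
    (hdeg : DegLE 2 T) (hbr : BranchEps T)
    (hcount : countc c T = n) :
    Real.logb 2 (n : ℝ) ≤ (score c T : ℝ) := by
  rcases Nat.eq_zero_or_pos n with rfl | hn
  · simp
  have hle : (n : ℝ) ≤ 2 ^ score c T := by
    have := countc_add_one_le_two_pow_score c hdeg hbr
    rw [hcount] at this
    exact_mod_cast (Nat.le_succ n).trans this
  calc Real.logb 2 n ≤ Real.logb 2 (2 ^ score c T) :=
        Real.logb_le_logb_of_le (by norm_num) (by exact_mod_cast hn) hle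
    _ = score c T := by simp [Real.logb_pow]

open LTree in
theorem stmt0 {α : Type} [DecidableEq α] (c : α) (T : LTree α) (n : ℕ)
    (hdeg : DegLE 2 T) (hbr : BranchEps T)
    (hn : 1 ≤ n) (hcount : countc c T = n) :
    Real.logb 2 (n : ℝ) ≤ (score c T : ℝ) :=
  stmt0_general c T n hdeg hbr hcount
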